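/- Under the setup of the previous statement, but now with a finite family Φ of deterministic maps Z^n → Θ, each depending on at most T < n coordinates, with probability at least 1 − δ it holds simultaneously for all φ ∈ Φ that |F̂(φ(z_{1:n})) − F(φ(z_{1:n}))| ≤ BT/n + B√(log(2|Φ|/δ)/(2n)). -/

import Mathlib

open MeasureTheory

/-!
Fix `φ ∈ Φ` and its index set `I`. The samples indexed by `I` move the empirical mean by at most
`B|I|/n ≤ BT/n`. Conditionally on them, `φ(z)` is a fixed parameter `θ` and the remaining
`n - |I|` samples are still i.i.d., so Hoeffding's inequality bounds the probability that their
centred sum exceeds `nBε` by `2 exp(-2n²ε²/(n - |I|)) ≤ 2 exp(-2nε²) = δ/|Φ|`.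
A union bound over `Φ` concludes.
-/

open ProbabilityTheory Real Finset
open scoped NNReal ENNReal

section Oscillation

variable {Z : Type*} {g : Z → ℝ} {B : ℝ}

lemma exists_forall_mem_Icc_of_abs_sub_le [Nonempty Z] (h : ∀ z z', |g z - g z'| ≤ B) :
    ∃ a, ∀ z, g z ∈ Set.Icc a (a + B) := by
  obtain ⟨z₀⟩ := ‹Nonempty Z›
  have hbdd : BddBelow (Set.range g) :=
    ⟨g z₀ - B, by rintro _ ⟨z, rfl⟩; linarith [(abs_le.1 (h z₀ z)).2]⟩
  refine ⟨⨅ z, g z, fun z => ⟨ciInf_le hbdd z, ?_⟩⟩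
  have : g z - B ≤ ⨅ z, g z := le_ciInf fun z' => by linarith [(abs_le.1 (h z z')).2]
  linarith

lemma abs_sub_integral_le_of_abs_sub_le [MeasurableSpace Z] (μ : Measure Z)
    [IsProbabilityMeasure μ] (hg : AEMeasurable g μ) (h : ∀ z z', |g z - g z'| ≤ B) (z : Z) :
    |g z - ∫ z', g z' ∂μ| ≤ B := by
  have := nonempty_of_isProbabilityMeasure μ
  obtain ⟨a, ha⟩ := exists_forall_mem_Icc_of_abs_sub_le h
  have hint : Integrable g μ := Integrable.of_mem_Icc a (a + B) hg (ae_of_all _ ha)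
  have hlo : a ≤ ∫ z', g z' ∂μ := by
    simpa using integral_mono (integrable_const a) hint fun z => (ha z).1
  have hhi : ∫ z', g z' ∂μ ≤ a + B := by
    simpa using integral_mono hint (integrable_const (a + B)) fun z => (ha z).2
  exact abs_sub_le_iff.2 ⟨by linarith [(ha z).2], by linarith [(ha z).1]⟩

end Oscillation

lemma abs_mean_sub_le {ι : Type*} [Fintype ι] [DecidableEq ι] [Nonempty ι] {x : ι → ℝ}
    {c B : ℝ} (hx : ∀ i, |x i - c| ≤ B) (I : Finset ι) :
    |(1 / Fintype.card ι) * ∑ i, x i - c| ≤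
      (#I * B + |∑ i ∈ Iᶜ, (x i - c)|) / Fintype.card ι := by
  have hN : (0 : ℝ) < Fintype.card ι := Nat.cast_pos.2 Fintype.card_pos
  have hsplit : (1 / Fintype.card ι) * ∑ i, x i - c =
      (∑ i ∈ I, (x i - c) + ∑ i ∈ Iᶜ, (x i - c)) / Fintype.card ι := by
    rw [sum_add_sum_compl, sum_sub_distrib, sum_const, card_univ, nsmul_eq_mul]
    field_simp
  have hI : |∑ i ∈ I, (x i - c)| ≤ #I * B := by
    simpa using (abs_sum_le_sum_abs _ _).trans (sum_le_card_nsmul I _ B fun i _ => hx i)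
  rw [hsplit, abs_div, abs_of_pos hN]
  gcongr
  exact (abs_add_le _ _).trans (by linarith)

lemma ProbabilityTheory.HasSubgaussianMGF.measure_abs_ge_le {Ω : Type*} [MeasurableSpace Ω]
    {μ : Measure Ω} [IsFiniteMeasure μ] {X : Ω → ℝ} {c : ℝ≥0} (h : HasSubgaussianMGF X c μ)
    {ε : ℝ} (hε : 0 ≤ ε) :
    μ.real {ω | ε ≤ |X ω|} ≤ 2 * exp (-ε ^ 2 / (2 * c)) := by
  have hsub : {ω | ε ≤ |X ω|} ⊆ {ω | ε ≤ X ω} ∪ {ω | ε ≤ (-X) ω} := fun ω (hω : ε ≤ |X ω|) =>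
    le_abs.1 hω
  calc μ.real {ω | ε ≤ |X ω|} ≤ μ.real {ω | ε ≤ X ω} + μ.real {ω | ε ≤ (-X) ω} :=
        (measureReal_mono hsub).trans (measureReal_union_le _ _)
    _ ≤ 2 * exp (-ε ^ 2 / (2 * c)) := by
        linarith [h.measure_ge_le hε, h.neg.measure_ge_le hε]

lemma measure_lt_abs_sum_sub_integral_le {ι Z : Type*} [Fintype ι] [MeasurableSpace Z]
    (μ : Measure Z) [IsProbabilityMeasure μ] {g : Z → ℝ} (hg : Measurable g) {B : ℝ}
    (hB : 0 ≤ B) (h : ∀ z z', |g z - g z'| ≤ B) {s : ℝ} (hs : 0 ≤ s) :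
    Measure.pi (fun _ : ι => μ) {w | B * s < |∑ i, (g (w i) - ∫ z, g z ∂μ)|} ≤
      ENNReal.ofReal (2 * exp (-2 * s ^ 2 / Fintype.card ι)) := by
  rcases hB.eq_or_lt with rfl | hB
  -- For `B = 0` the sub-Gaussian tail below degenerates (`x / 0 = 0`), but every summand vanishes.
  · have hzero (w : ι → Z) : ∑ i, (g (w i) - ∫ z, g z ∂μ) = 0 :=
      sum_eq_zero fun i _ => abs_nonpos_iff.1 <|
        abs_sub_integral_le_of_abs_sub_le μ hg.aemeasurable h (w i)
    simp [hzero]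
  have := nonempty_of_isProbabilityMeasure μ
  obtain ⟨a, ha⟩ := exists_forall_mem_Icc_of_abs_sub_le h
  have hsubG : HasSubgaussianMGF (fun z => g z - ∫ z, g z ∂μ) ((‖a + B - a‖₊ / 2) ^ 2) μ :=
    hasSubgaussianMGF_of_mem_Icc hg.aemeasurable (ae_of_all _ ha)
  have hsum := HasSubgaussianMGF.sum_of_iIndepFun (s := univ)
    (iIndepFun_pi (μ := fun _ : ι => μ) fun _ => (hg.sub_const _).aemeasurable)
    fun i _ => HasSubgaussianMGF.of_map (X := fun z => g z - ∫ z, g z ∂μ)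
      (measurable_pi_apply i).aemeasurable (by rwa [(measurePreserving_eval _ i).map_eq])
  have hexp : -(B * s) ^ 2 / (2 * ((∑ _i : ι, (‖a + B - a‖₊ / 2) ^ 2 : ℝ≥0) : ℝ)) =
      -2 * s ^ 2 / Fintype.card ι := by
    push_cast
    rw [add_sub_cancel_left, Real.norm_of_nonneg hB.le, sum_const, card_univ, nsmul_eq_mul]
    rw [show -(B * s) ^ 2 = B ^ 2 * -s ^ 2 by ring, show 2 * (Fintype.card ι * (B / 2) ^ 2) =
      B ^ 2 * (Fintype.card ι / 2) by ring, mul_div_mul_left _ _ (by positivity)]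
    ring
  calc Measure.pi (fun _ : ι => μ) {w | B * s < |∑ i, (g (w i) - ∫ z, g z ∂μ)|}
      ≤ Measure.pi (fun _ : ι => μ) {w | B * s ≤ |∑ i, (g (w i) - ∫ z, g z ∂μ)|} :=
        measure_mono fun _ (hw : B * s < _) => hw.le
    _ ≤ ENNReal.ofReal (2 * exp (-2 * s ^ 2 / Fintype.card ι)) := by
        rw [← ofReal_measureReal, ← hexp]
        exact ENNReal.ofReal_le_ofReal (hsum.measure_abs_ge_le (by positivity))

lemma measure_pi_le_of_forall_measure_slice_le {ι : Type*} [Fintype ι] {α : ι → Type*}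
    [∀ i, MeasurableSpace (α i)] (μ : ∀ i, Measure (α i)) [∀ i, IsProbabilityMeasure (μ i)]
    (p : ι → Prop) [DecidablePred p] {S : Set (∀ i, α i)} (hS : MeasurableSet S) {C : ℝ≥0∞}
    (h : ∀ v, Measure.pi (fun i : {i // ¬ p i} => μ i)
      {w | (Equiv.piEquivPiSubtypeProd p α).symm (v, w) ∈ S} ≤ C) :
    Measure.pi μ S ≤ C := by
  have he := (measurePreserving_piEquivPiSubtypeProd μ p).symm
  rw [← he.measure_preimage_equiv, Measure.prod_apply (he.measurable hS)]
  calc ∫⁻ v, _ ∂Measure.pi (fun i : {i // p i} => μ i) ≤ ∫⁻ _, C ∂Measure.pi _ :=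
        lintegral_mono h
    _ = C := by simp

lemma measure_lt_abs_sum_compl_le {ι Θ Z : Type*} [Fintype ι] [DecidableEq ι]
    [MeasurableSpace Θ] [MeasurableSpace Z] (μ : Measure Z) [IsProbabilityMeasure μ]
    {f : Θ → Z → ℝ} (hf : Measurable (Function.uncurry f)) {B : ℝ} (hB : 0 ≤ B)
    (hosc : ∀ θ z z', |f θ z - f θ z'| ≤ B) {φ : (ι → Z) → Θ} (hφ : Measurable φ)
    {I : Finset ι} (hdep : ∀ z z', (∀ i ∈ I, z i = z' i) → φ z = φ z') {s : ℝ} (hs : 0 ≤ s) :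
    Measure.pi (fun _ : ι => μ)
        {z | B * s < |∑ i ∈ Iᶜ, (f (φ z) (z i) - ∫ z', f (φ z) z' ∂μ)|} ≤
      ENNReal.ofReal (2 * exp (-2 * s ^ 2 / #Iᶜ)) := by
  have := nonempty_of_isProbabilityMeasure μ
  have hF : Measurable fun θ => ∫ z, f θ z ∂μ :=
    hf.stronglyMeasurable.integral_prod_right'.measurable
  refine measure_pi_le_of_forall_measure_slice_le _ (· ∈ I) ?_ fun v => ?_
  · exact measurableSet_lt measurable_const <| Measurable.abs <| measurable_sum _ fun i _ =>
      (hf.comp (hφ.prodMk (measurable_pi_apply i))).sub (hF.comp hφ)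
  set e := (Equiv.piEquivPiSubtypeProd (· ∈ I) fun _ => Z).symm
  set θ := φ (e (v, Classical.arbitrary _))
  have hθ (w) : φ (e (v, w)) = θ := hdep _ _ fun i hi => by simp [e, hi]
  have hslice : {w | e (v, w) ∈ {z : ι → Z |
      B * s < |∑ i ∈ Iᶜ, (f (φ z) (z i) - ∫ z', f (φ z) z' ∂μ)|}} =
      {w | B * s < |∑ j, (f θ (w j) - ∫ z', f θ z' ∂μ)|} := by
    ext w
    have hw (j : {i // i ∉ I}) : e (v, w) j = w j := dif_neg j.2
    simp only [Set.mem_ofPred_eq, hθ, sum_subtype Iᶜ (p := (· ∉ I)) fun _ => mem_compl, hw]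
  rw [hslice]
  have hcard : Fintype.card {i // i ∉ I} = #Iᶜ := by simp [card_compl]
  have := measure_lt_abs_sum_sub_integral_le (ι := {i // i ∉ I}) μ
    (hf.comp measurable_prodMk_left) hB (hosc θ) hs
  rwa [hcard] at this

lemma measure_lt_abs_mean_sub_integral_le {ι Θ Z : Type*} [Fintype ι]
    [MeasurableSpace Θ] [MeasurableSpace Z] (μ : Measure Z) [IsProbabilityMeasure μ]
    {f : Θ → Z → ℝ} (hf : Measurable (Function.uncurry f)) {B : ℝ} (hB : 0 ≤ B)
    (hosc : ∀ θ z z', |f θ z - f θ z'| ≤ B) {φ : (ι → Z) → Θ} (hφ : Measurable φ)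
    {I : Finset ι} {T : ℕ} (hI : #I ≤ T) (hT : T < Fintype.card ι)
    (hdep : ∀ z z', (∀ i ∈ I, z i = z' i) → φ z = φ z') {s : ℝ} (hs : 0 ≤ s) :
    Measure.pi (fun _ : ι => μ)
        {z | B * T / Fintype.card ι + B * s <
          |(1 / Fintype.card ι) * ∑ i, f (φ z) (z i) - ∫ z', f (φ z) z' ∂μ|} ≤
      ENNReal.ofReal (2 * exp (-2 * Fintype.card ι * s ^ 2)) := by
  classical
  set N := Fintype.card ι
  have : Nonempty ι := Fintype.card_pos_iff.1 (by omega)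
  have hN : (0 : ℝ) < N := by positivity
  have hsub : {z | B * T / N + B * s < |(1 / N) * ∑ i, f (φ z) (z i) - ∫ z', f (φ z) z' ∂μ|} ⊆
      {z | B * (N * s) < |∑ i ∈ Iᶜ, (f (φ z) (z i) - ∫ z', f (φ z) z' ∂μ)|} := by
    intro z hz
    simp only [Set.mem_ofPred_eq] at hz ⊢
    by_contra! hle
    have hfθ : Measurable (f (φ z)) := hf.comp measurable_prodMk_left
    have hmean := abs_mean_sub_le (fun i => abs_sub_integral_le_of_abs_sub_le μ
      hfθ.aemeasurable (hosc (φ z)) (z i)) I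
    have hIB : (#I : ℝ) * B ≤ T * B := by gcongr
    have : (#I * B + |∑ i ∈ Iᶜ, (f (φ z) (z i) - ∫ z', f (φ z) z' ∂μ)|) / N ≤
        B * T / N + B * s := by
      rw [div_le_iff₀ hN]
      field_simp
      linarith
    exact lt_irrefl _ (hz.trans_le (hmean.trans this))
  have hcard : (0 : ℝ) < #Iᶜ ∧ (#Iᶜ : ℝ) ≤ N := by
    rw [card_compl]
    constructor
    · exact_mod_cast Nat.sub_pos_of_lt (hI.trans_lt hT)
    · exact_mod_cast Nat.sub_le _ _
  refine (measure_mono hsub).trans <| (measure_lt_abs_sum_compl_le μ hf hB hosc hφ hdep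
    (by positivity)).trans <| ENNReal.ofReal_le_ofReal ?_
  gcongr
  rw [div_le_iff₀ hcard.1]
  nlinarith [mul_le_mul_of_nonneg_left hcard.2 (by positivity : (0 : ℝ) ≤ 2 * N * s ^ 2)]

lemma ofReal_one_sub_le_measure_of_measure_compl_le {Ω : Type*} [MeasurableSpace Ω]
    {μ : Measure Ω} [IsProbabilityMeasure μ] {s : Set Ω} {δ : ℝ} (hδ : 0 ≤ δ)
    (h : μ sᶜ ≤ ENNReal.ofReal δ) : ENNReal.ofReal (1 - δ) ≤ μ s := by
  rw [ENNReal.ofReal_sub _ hδ, ENNReal.ofReal_one, tsub_le_iff_right]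
  calc 1 = μ Set.univ := measure_univ.symm
    _ ≤ μ s + μ sᶜ := measure_univ_le_add_compl s
    _ ≤ μ s + ENNReal.ofReal δ := by gcongr

lemma measure_biUnion_finset_le_ofReal {ι Ω : Type*} [MeasurableSpace Ω] {μ : Measure Ω}
    {s : Finset ι} {A : ι → Set Ω} {δ : ℝ} (h : ∀ i ∈ s, μ (A i) ≤ ENNReal.ofReal (δ / #s)) :
    μ (⋃ i ∈ s, A i) ≤ ENNReal.ofReal δ := by
  refine (measure_biUnion_finset_le _ _).trans <| (sum_le_sum h).trans ?_
  rw [sum_const, nsmul_eq_mul, ← ENNReal.ofReal_natCast, ← ENNReal.ofReal_mul (by positivity)]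
  rcases (Nat.cast_nonneg (α := ℝ) #s).eq_or_lt with hs | hs
  · simp [← hs]
  · rw [mul_div_cancel₀ _ hs.ne']

/-- Uniform concentration over a finite family `Φ` of deterministic algorithms,
each depending on at most `T < n` of the samples: with probability at least
`1 − δ`, simultaneously for all `φ ∈ Φ`,
`|F̂(φ(z)) − F(φ(z))| ≤ BT/n + B √(log(2|Φ|/δ)/(2n))`. -/
theorem uniform_concentration_over_cover
    {Θ : Type*} [MeasurableSpace Θ] {Z : Type*} [MeasurableSpace Z]
    (μ : Measure Z) [IsProbabilityMeasure μ]
    (f : Θ → Z → ℝ) (B : ℝ) (hB : 0 ≤ B)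
    (hfmeas : Measurable (Function.uncurry f))
    (hdev : ∀ θ, ∀ z z' : Z, |f θ z - f θ z'| ≤ B)
    (n T : ℕ) (hTn : T < n)
    (Φ : Finset ((Fin n → Z) → Θ))
    (hΦ : ∀ φ ∈ Φ, Measurable φ ∧ ∃ I : Finset (Fin n), I.card ≤ T ∧
      ∀ z z' : Fin n → Z, (∀ i ∈ I, z i = z' i) → φ z = φ z')
    (δ : ℝ) (hδ0 : 0 < δ) (hδ1 : δ < 1) :
    ENNReal.ofReal (1 - δ) ≤
      (Measure.pi fun _ : Fin n => μ)
        {z | ∀ φ ∈ Φ,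
          |(1 / (n : ℝ)) * ∑ i, f (φ z) (z i) - ∫ z', f (φ z) z' ∂μ| ≤
            B * T / n + B * Real.sqrt (Real.log (2 * Φ.card / δ) / (2 * n))} := by
  set ε := √(log (2 * #Φ / δ) / (2 * n))
  have hbad : ∀ φ ∈ Φ, Measure.pi (fun _ : Fin n => μ)
      {z | B * T / n + B * ε < |(1 / (n : ℝ)) * ∑ i, f (φ z) (z i) - ∫ z', f (φ z) z' ∂μ|} ≤
      ENNReal.ofReal (δ / #Φ) := by
    intro φ hφ
    obtain ⟨hφm, I, hI, hdep⟩ := hΦ φ hφ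
    have hΦpos : (1 : ℝ) ≤ #Φ := by exact_mod_cast card_pos.2 ⟨φ, hφ⟩
    have hL : 0 ≤ log (2 * #Φ / δ) := log_nonneg <| by rw [le_div_iff₀ hδ0]; linarith
    have htail := measure_lt_abs_mean_sub_integral_le μ hfmeas hB hdev hφm hI
      (by simpa using hTn) hdep (s := ε) (sqrt_nonneg _)
    simp only [Fintype.card_fin] at htail
    refine htail.trans (ENNReal.ofReal_le_ofReal (le_of_eq ?_))
    have hn : (0 : ℝ) < n := by exact_mod_cast (Nat.zero_le T).trans_lt hTn
    rw [sq_sqrt (by positivity), show -2 * n * (log (2 * #Φ / δ) / (2 * n)) =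
      -log (2 * #Φ / δ) by field_simp, exp_neg, exp_log (by positivity)]
    field_simp
  refine ofReal_one_sub_le_measure_of_measure_compl_le hδ0.le <|
    (measure_mono fun z hz => ?_).trans (measure_biUnion_finset_le_ofReal hbad)
  simpa using hz
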